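/- arXiv:2503.14548 — 2 statements merged into one kernel-verified Lean document; each statement's English description precedes it below -/
import Mathlib

section
/- (John's theorem) Let K ⊂ ℝⁿ be a compact convex set with nonempty interior such that K = -K. Then there exists an invertible linear transformation T : ℝⁿ → ℝⁿ such that B_n ⊆ T(K) ⊆ √n·B_n, where B_n is the closed Euclidean unit ball in ℝⁿ. -/
/-
Among the linear images `T(B)` of the unit ball contained in `K` pick one of maximal volume
`|det T|`; it exists by compactness and is nondegenerate because `K` is a neighbourhood of `0`.
After the change of variables `T⁻¹` the unit ball is this maximal ellipsoid inside `C = T⁻¹(K)`.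
If `C` contained a point `p = s v` with `‖v‖ = 1` and `s > √n`, it would contain the convex hull
of `B` and `±p`, and hence the ellipsoid with semi-axis `a` along `v` and `b` on `v⊥` as soon as
`1 ≤ a`, `b ≤ 1` and `a² + b² (s² - 1) ≤ s²`. For `s² > n` these can be chosen with
`a b ^ (n - 1) > 1`, contradicting maximality.
-/

open Set Metric Module InnerProductSpace
open scoped RealInnerProductSpace Topology

/- With `a² = 1 + (s² - 1) τ` and `b² = 1 - τ` the first constraint is an equality, while
`(1 + (s² - 1) τ) (1 - τ) ^ m` has slope `s² - 1 - m > 0` at `τ = 0`; `τ` is taken small enough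
for Bernoulli's inequality to keep the product above `1`. -/
theorem exists_stretch_params (m : ℕ) {s : ℝ} (hs : (m + 1 : ℝ) < s ^ 2) :
    ∃ a b : ℝ, 1 ≤ a ∧ 0 ≤ b ∧ b ≤ 1 ∧ a ^ 2 + b ^ 2 * (s ^ 2 - 1) ≤ s ^ 2 ∧ 1 < a * b ^ m := by
  set u := s ^ 2 - 1
  have hm : (0 : ℝ) ≤ m := m.cast_nonneg
  have hum : (m : ℝ) < u := by linarith
  have hu : 0 < u := by linarith
  set τ := (u - m) / (2 * (m + 1) * u) with hτ
  have hτ0 : 0 < τ := by positivity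
  have hτ1 : τ ≤ 1 := by
    rw [div_le_one (by positivity)]
    nlinarith
  have hgain : 1 < (1 + u * τ) * (1 - m * τ) := by
    have : u * m * τ < u - m := by
      have : u * m * τ = (u - m) * (m / (2 * (m + 1))) := by
        rw [hτ]
        field_simp
      rw [this]
      apply mul_lt_of_lt_one_right (by linarith)
      rw [div_lt_one (by positivity)]
      linarith
    nlinarith [mul_pos hτ0 (sub_pos.2 hum)]
  have hbern : 1 - m * τ ≤ (1 - τ) ^ m := by
    simpa [sub_eq_add_neg] using one_add_mul_le_pow (by linarith : (-2 : ℝ) ≤ -τ) m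
  have hsq : (√(1 + u * τ) * √(1 - τ) ^ m) ^ 2 = (1 + u * τ) * (1 - τ) ^ m := by
    rw [mul_pow, ← pow_mul, mul_comm m 2, pow_mul, Real.sq_sqrt (by positivity),
      Real.sq_sqrt (by linarith)]
  refine ⟨√(1 + u * τ), √(1 - τ), Real.one_le_sqrt.2 (by nlinarith), Real.sqrt_nonneg _,
    Real.sqrt_le_one.2 (by linarith), ?_, ?_⟩
  · rw [Real.sq_sqrt (by positivity), Real.sq_sqrt (by linarith)]
    linarith
  · refine (one_lt_sq_iff₀ (by positivity)).1 ?_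
    calc 1 < (1 + u * τ) * (1 - m * τ) := hgain
      _ ≤ (1 + u * τ) * (1 - τ) ^ m := by gcongr
      _ = _ := hsq.symm

/- In the plane spanned by a unit vector and an orthogonal one, the point `(a c, b √(1 - c²))` of
the ellipse with semi-axes `a, b` lies in the disc of radius `1 - t` about `(t s, 0)`, which is
contained in the convex hull of the unit disc and `(s, 0)`. -/
theorem exists_cone_ball_of_ellipse_point {s a b c : ℝ} (hs : 1 < s) (ha : 1 ≤ a) (hb : 0 ≤ b)
    (hb1 : b ≤ 1) (hab : a ^ 2 + b ^ 2 * (s ^ 2 - 1) ≤ s ^ 2) (hc : 0 ≤ c) (hc1 : c ≤ 1) :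
    ∃ t ∈ Icc (0 : ℝ) 1, (a * c - t * s) ^ 2 + b ^ 2 * (1 - c ^ 2) ≤ (1 - t) ^ 2 := by
  have hs2 : 0 < s ^ 2 - 1 := by nlinarith
  have hc2 : 0 ≤ 1 - c ^ 2 := by nlinarith
  rcases le_or_gt (a * c * s) 1 with hacs | hacs
  · refine ⟨0, left_mem_Icc.2 zero_le_one, ?_⟩
    have h1 : (a ^ 2 - b ^ 2) * c ^ 2 ≤ s ^ 2 * (1 - b ^ 2) * c ^ 2 := by
      gcongr; linarith
    have hb2 : 0 ≤ 1 - b ^ 2 := by nlinarith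
    have h2 : s ^ 2 * (1 - b ^ 2) * c ^ 2 ≤ (1 - b ^ 2) * (a * c * s) ^ 2 :=
      calc s ^ 2 * (1 - b ^ 2) * c ^ 2 ≤ a ^ 2 * s ^ 2 * (1 - b ^ 2) * c ^ 2 := by
            gcongr; exact le_mul_of_one_le_left (sq_nonneg s) (one_le_pow₀ ha)
        _ = (1 - b ^ 2) * (a * c * s) ^ 2 := by ring
    have h3 : (1 - b ^ 2) * (a * c * s) ^ 2 ≤ 1 - b ^ 2 := by
      have : (a * c * s) ^ 2 ≤ 1 := by
        rw [sq_le_one_iff_abs_le_one]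
        exact abs_le.2 ⟨by nlinarith [mul_nonneg (by linarith : (0:ℝ) ≤ a) hc], hacs⟩
      exact mul_le_of_le_one_right hb2 this
    nlinarith
  · have has : a ≤ s := by nlinarith
    have hac : a * c ≤ s := (mul_le_of_le_one_right (by linarith) hc1).trans has
    set t := (a * c * s - 1) / (s ^ 2 - 1) with ht
    refine ⟨t, ⟨div_nonneg (by linarith) hs2.le, ?_⟩, ?_⟩
    · rw [ht, div_le_one hs2]
      nlinarith [mul_le_mul_of_nonneg_right hac (by linarith : 0 ≤ s)]
    · have hgap : (1 - t) ^ 2 - (a * c - t * s) ^ 2 = (s - a * c) ^ 2 / (s ^ 2 - 1) := by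
        rw [ht]
        field_simp
        ring
      have hcone : b ^ 2 * (1 - c ^ 2) ≤ (s - a * c) ^ 2 / (s ^ 2 - 1) := by
        have hslack : 0 ≤ s ^ 2 - a ^ 2 - b ^ 2 * (s ^ 2 - 1) := by linarith
        rw [le_div_iff₀ hs2]
        nlinarith [sq_nonneg (s * c - a), mul_nonneg hslack hc2]
      linarith

theorem Convex.mem_nhds_zero_of_eq_neg {F : Type*} [AddCommGroup F] [Module ℝ F]
    [TopologicalSpace F] [IsTopologicalAddGroup F] [ContinuousSMul ℝ F] {K : Set F}
    (hK : Convex ℝ K) (hint : (interior K).Nonempty) (hsymm : K = -K) : K ∈ 𝓝 0 := by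
  obtain ⟨x, hx⟩ := hint
  have hx' : -x ∈ interior K := by
    have := (Homeomorph.neg F).image_interior K ▸ mem_image_of_mem (Homeomorph.neg F) hx
    simpa [← hsymm] using this
  have hmid := hK.interior hx hx' (by norm_num : (0 : ℝ) ≤ 1 / 2) (by norm_num : (0 : ℝ) ≤ 1 / 2)
    (by norm_num)
  simpa using mem_interior_iff_mem_nhds.1 hmid

theorem isCompact_setOf_mapsTo_closedBall {E F : Type*} [NormedAddCommGroup E] [NormedSpace ℝ E]
    [FiniteDimensional ℝ E] [NormedAddCommGroup F] [NormedSpace ℝ F] [FiniteDimensional ℝ F]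
    {K : Set F} (hK : IsCompact K) :
    IsCompact {T : E →L[ℝ] F | MapsTo T (closedBall 0 1) K} := by
  refine isCompact_of_isClosed_isBounded ?_ ?_
  · simp only [MapsTo, ofPred_forall]
    exact isClosed_biInter fun x _ ↦ hK.isClosed.preimage (continuous_eval_const x)
  · obtain ⟨R, hR0, hR⟩ := hK.isBounded.exists_pos_norm_le
    refine isBounded_iff_forall_norm_le.2 ⟨R, fun T hT ↦ ?_⟩
    exact T.opNorm_le_of_unit_norm hR0.le fun x hx ↦ hR _ (hT (by simp [hx]))

theorem exists_mapsTo_closedBall_abs_det_max {E : Type*} [NormedAddCommGroup E]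
    [NormedSpace ℝ E] [FiniteDimensional ℝ E] {K : Set E}
    (hK : IsCompact K) (h0 : K ∈ 𝓝 0) :
    ∃ T : E →L[ℝ] E, MapsTo T (closedBall 0 1) K ∧ T.det ≠ 0 ∧
      ∀ M : E →L[ℝ] E, MapsTo M (closedBall 0 1) K → |M.det| ≤ |T.det| := by
  obtain ⟨ε, hε, hεK⟩ := nhds_basis_closedBall.mem_iff.1 h0
  have hεS : MapsTo (ε • ContinuousLinearMap.id ℝ E) (closedBall 0 1) K := fun x hx ↦ hεK <| by
    simp only [mem_closedBall, dist_zero_right] at hx ⊢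
    simpa [norm_smul, abs_of_pos hε] using mul_le_of_le_one_right hε.le hx
  obtain ⟨T, hTS, hTmax⟩ := (isCompact_setOf_mapsTo_closedBall hK).exists_isMaxOn ⟨_, hεS⟩
    ContinuousLinearMap.continuous_det.abs.continuousOn
  refine ⟨T, hTS, fun hT ↦ ?_, fun M hM ↦ hTmax hM⟩
  have : |(ε • ContinuousLinearMap.id ℝ E).det| ≤ |T.det| := hTmax hεS
  rw [hT, ContinuousLinearMap.det, ContinuousLinearMap.toLinearMap_smul,
    ContinuousLinearMap.coe_id, LinearMap.det_smul, LinearMap.det_id] at this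
  simp only [mul_one, abs_pow, abs_zero, abs_of_pos hε] at this
  exact this.not_gt (pow_pos hε _)

section InnerProductSpace

variable {E : Type*} [NormedAddCommGroup E] [InnerProductSpace ℝ E]

noncomputable def stretch (v : E) (a b : ℝ) : E →L[ℝ] E :=
  b • ContinuousLinearMap.id ℝ E + (a - b) • rankOne ℝ v v

theorem stretch_apply (v : E) (a b : ℝ) (y : E) :
    stretch v a b y = (a * ⟪v, y⟫) • v + b • (y - ⟪v, y⟫ • v) := by
  simp only [stretch, add_apply, smul_apply, ContinuousLinearMap.id_apply, rankOne_apply]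
  module

theorem stretch_apply_self {v : E} (hv : ‖v‖ = 1) (a b : ℝ) : stretch v a b v = a • v := by
  simp [stretch_apply, hv]

theorem stretch_apply_of_inner_eq_zero (v : E) (a b : ℝ) {w : E} (hw : ⟪v, w⟫ = 0) :
    stretch v a b w = b • w := by
  simp [stretch_apply, hw]

theorem det_stretch [FiniteDimensional ℝ E] {v : E} (hv : ‖v‖ = 1) (a b : ℝ) :
    (stretch v a b).det = a * b ^ (finrank ℝ E - 1) := by
  obtain ⟨m, hm⟩ : ∃ m, finrank ℝ E = m + 1 :=
    Nat.exists_eq_succ_of_ne_zero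
      (finrank_pos_iff_exists_ne_zero.2 ⟨v, ne_zero_of_norm_ne_zero (hv ▸ one_ne_zero)⟩).ne'
  have hv' : Orthonormal ℝ (({0} : Set (Fin (m + 1))).domRestrict fun _ ↦ v) :=
    orthonormal_iff_ite.2 fun i j ↦ by
      simp [Subsingleton.elim i j, Set.domRestrict, hv]
  obtain ⟨e, he⟩ := hv'.exists_orthonormalBasis_extension_of_card_eq (by simp [hm])
  let d : Fin (m + 1) → ℝ := Fin.cons a fun _ ↦ b
  have heig : ∀ j, stretch v a b (e j) = d j • e j := by
    refine Fin.cases ?_ fun k ↦ ?_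
    · simp [he 0 rfl, stretch_apply_self hv, d]
    · refine stretch_apply_of_inner_eq_zero v a b ?_
      rw [← he 0 rfl, e.inner_eq_zero (Fin.succ_ne_zero k).symm]
  have hmat : LinearMap.toMatrix e.toBasis e.toBasis (stretch v a b : E →ₗ[ℝ] E) =
      Matrix.diagonal d := by
    ext i j
    obtain rfl | hij := eq_or_ne i j
    · simp [LinearMap.toMatrix_apply, heig]
    · simp [LinearMap.toMatrix_apply, heig, hij]
  rw [ContinuousLinearMap.det, ← LinearMap.det_toMatrix e.toBasis, hmat, Matrix.det_diagonal,
    Fin.prod_univ_succ]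
  simp [d, hm]

open scoped Pointwise in
theorem Convex.mem_of_norm_sub_smul_le {C : Set E} (hC : Convex ℝ C) (hB : closedBall 0 1 ⊆ C)
    {p x : E} (hp : p ∈ C) {t : ℝ} (ht : t ∈ Icc (0 : ℝ) 1) (hx : ‖x - t • p‖ ≤ 1 - t) :
    x ∈ C := by
  obtain ⟨z, hz, hzx⟩ : x - t • p ∈ (1 - t) • closedBall (0 : E) 1 := by
    rw [smul_unitClosedBall_of_nonneg (sub_nonneg.2 ht.2)]
    simpa using hx
  rw [← sub_add_cancel x (t • p), ← hzx, add_comm]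
  exact hC hp (hB hz) ht.1 (sub_nonneg.2 ht.2) (by ring)

theorem Convex.mapsTo_stretch {C : Set E} (hC : Convex ℝ C) (hB : closedBall 0 1 ⊆ C) {v : E}
    (hv : ‖v‖ = 1) {s a b : ℝ} (hsv : s • v ∈ C) (hsv' : -(s • v) ∈ C) (hs : 1 < s) (ha : 1 ≤ a)
    (hb : 0 ≤ b) (hb1 : b ≤ 1) (hab : a ^ 2 + b ^ 2 * (s ^ 2 - 1) ≤ s ^ 2) :
    MapsTo (stretch v a b) (closedBall 0 1) C := by
  intro y hy
  rw [mem_closedBall, dist_zero_right] at hy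
  set c := ⟪v, y⟫
  set w := y - c • v
  have hvw : ⟪v, w⟫ = 0 := by
    simp [w, c, inner_sub_right, real_inner_smul_right, hv]
  have hw : ‖w‖ ^ 2 ≤ 1 - c ^ 2 := by
    have : ‖y‖ ^ 2 = c ^ 2 + ‖w‖ ^ 2 := by
      rw [show y = c • v + w by simp [w], norm_add_sq_real, real_inner_smul_left, hvw, norm_smul,
        hv, Real.norm_eq_abs, mul_one, sq_abs]
      ring
    nlinarith [norm_nonneg y]
  have hc : |c| ≤ 1 := (abs_real_inner_le_norm v y).trans (by rw [hv, one_mul]; exact hy)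
  obtain ⟨σ, hσC, hσ, hcσ⟩ : ∃ σ : ℝ, σ • s • v ∈ C ∧ σ ^ 2 = 1 ∧ c = σ * |c| := by
    rcases le_total 0 c with h | h
    · exact ⟨1, by simpa using hsv, by norm_num, by rw [abs_of_nonneg h, one_mul]⟩
    · exact ⟨-1, by simpa using hsv', by norm_num, by rw [abs_of_nonpos h]; ring⟩
  obtain ⟨t, ht, hle⟩ := exists_cone_ball_of_ellipse_point hs ha hb hb1 hab (abs_nonneg c) hc
  refine hC.mem_of_norm_sub_smul_le hB hσC ht ?_
  have hdecomp : stretch v a b y - t • σ • s • v = (σ * (a * |c| - t * s)) • v + b • w := by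
    have : σ * (a * |c| - t * s) = a * c - t * σ * s := by linear_combination -a * hcσ
    rw [stretch_apply, this]
    module
  have hsq : ‖stretch v a b y - t • σ • s • v‖ ^ 2 ≤ (1 - t) ^ 2 :=
    calc ‖stretch v a b y - t • σ • s • v‖ ^ 2 = (a * |c| - t * s) ^ 2 + b ^ 2 * ‖w‖ ^ 2 := by
          rw [hdecomp, norm_add_sq_real, inner_smul_left, inner_smul_right, hvw, norm_smul,
            norm_smul, hv]
          simp only [Real.norm_eq_abs, mul_pow, sq_abs, hσ]
          ring
      _ ≤ (a * |c| - t * s) ^ 2 + b ^ 2 * (1 - |c| ^ 2) := by rw [sq_abs]; gcongr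
      _ ≤ (1 - t) ^ 2 := hle
  exact (sq_le_sq₀ (norm_nonneg _) (sub_nonneg.2 ht.2)).1 hsq

theorem subset_closedBall_sqrt_finrank_of_abs_det_le_one [FiniteDimensional ℝ E] {C : Set E}
    (hC : Convex ℝ C) (hneg : ∀ x ∈ C, -x ∈ C) (hB : closedBall 0 1 ⊆ C)
    (hdet : ∀ M : E →L[ℝ] E, MapsTo M (closedBall 0 1) C → |M.det| ≤ 1) :
    C ⊆ closedBall 0 √(finrank ℝ E) := by
  intro x hx
  by_contra hfar
  rw [mem_closedBall, dist_zero_right, not_le] at hfar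
  set s := ‖x‖
  have hs : 0 < s := (Real.sqrt_nonneg _).trans_lt hfar
  obtain ⟨m, hm⟩ : ∃ m, finrank ℝ E = m + 1 :=
    Nat.exists_eq_succ_of_ne_zero (finrank_pos_iff_exists_ne_zero.2 ⟨x, norm_pos_iff.1 hs⟩).ne'
  have hs2 : (m + 1 : ℝ) < s ^ 2 := by exact_mod_cast hm ▸ (Real.sqrt_lt' hs).1 hfar
  have hs1 : 1 < s := by nlinarith [m.cast_nonneg (α := ℝ)]
  obtain ⟨a, b, ha, hb, hb1, hab, hdet_gt⟩ := exists_stretch_params m hs2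
  set v := s⁻¹ • x
  have hv : ‖v‖ = 1 := by rw [norm_smul, norm_inv, norm_norm, inv_mul_cancel₀ hs.ne']
  have hsv : s • v = x := smul_inv_smul₀ hs.ne' x
  have hmaps := hC.mapsTo_stretch hB hv (hsv ▸ hx) (hsv ▸ hneg x hx) hs1 ha hb hb1 hab
  have := hdet _ hmaps
  rw [det_stretch hv, hm, Nat.add_sub_cancel] at this
  exact (hdet_gt.trans_le (le_abs_self _)).not_ge this

end InnerProductSpace

theorem john_theorem_general (n : ℕ) (K : Set (EuclideanSpace ℝ (Fin n)))
    (hKcompact : IsCompact K) (hKconv : Convex ℝ K) (hKint : (interior K).Nonempty)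
    (hKsymm : K = -K) :
    ∃ T : EuclideanSpace ℝ (Fin n) ≃ₗ[ℝ] EuclideanSpace ℝ (Fin n),
      closedBall (0 : EuclideanSpace ℝ (Fin n)) 1 ⊆ T '' K ∧
        T '' K ⊆ closedBall (0 : EuclideanSpace ℝ (Fin n)) (Real.sqrt n) := by
  obtain ⟨T, hTK, hTdet, hTmax⟩ :=
    exists_mapsTo_closedBall_abs_det_max hKcompact (hKconv.mem_nhds_zero_of_eq_neg hKint hKsymm)
  set e := T.toContinuousLinearEquivOfDetNeZero hTdet
  have hball : closedBall 0 1 ⊆ e.symm '' K := fun x hx ↦ ⟨T x, hTK hx, e.symm_apply_apply x⟩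
  have hneg : ∀ x ∈ e.symm '' K, -x ∈ e.symm '' K := by
    rintro _ ⟨k, hk, rfl⟩
    exact ⟨-k, by rw [hKsymm]; exact neg_mem_neg.2 hk, map_neg _ _⟩
  refine ⟨e.symm.toLinearEquiv, hball, ?_⟩
  have hdet : ∀ M : EuclideanSpace ℝ (Fin n) →L[ℝ] EuclideanSpace ℝ (Fin n),
      MapsTo M (closedBall 0 1) (e.symm '' K) → |M.det| ≤ 1 := by
    intro M hM
    have hTM : MapsTo (T ∘L M) (closedBall 0 1) K := by
      intro x hx
      obtain ⟨k, hk, hkx⟩ := hM hx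
      rwa [ContinuousLinearMap.comp_apply, ← hkx,
        show T (e.symm k) = k from e.apply_symm_apply k]
    have := hTmax _ hTM
    rw [ContinuousLinearMap.det, ContinuousLinearMap.toLinearMap_comp, LinearMap.det_comp,
      abs_mul] at this
    exact (mul_le_iff_le_one_right (abs_pos.2 hTdet)).1 this
  simpa using
    subset_closedBall_sqrt_finrank_of_abs_det_le_one (hKconv.linear_image _) hneg hball hdet

/-- **John's theorem** (symmetric case): for every origin-symmetric convex body
`K ⊆ ℝⁿ` there is an invertible linear map `T` with `B_n ⊆ T(K) ⊆ √n · B_n`. -/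
theorem john_theorem (n : ℕ) (hn : 0 < n) (K : Set (EuclideanSpace ℝ (Fin n)))
    (hKcompact : IsCompact K) (hKconv : Convex ℝ K) (hKint : (interior K).Nonempty)
    (hKsymm : K = -K) :
    ∃ T : EuclideanSpace ℝ (Fin n) ≃ₗ[ℝ] EuclideanSpace ℝ (Fin n),
      closedBall (0 : EuclideanSpace ℝ (Fin n)) 1 ⊆ T '' K ∧
        T '' K ⊆ closedBall (0 : EuclideanSpace ℝ (Fin n)) (Real.sqrt n) :=
  john_theorem_general n K hKcompact hKconv hKint hKsymm
end

section
/- Let σ denote the unique rotation-invariant probability measure on the Euclidean unit sphere S^{n-1} ⊂ ℝⁿ. Then for every u ∈ S^{n-1} and every ε ∈ (0,1), σ({θ ∈ S^{n-1} : ⟨θ, u⟩ < ε}) > 1 - e^{-nε²/2}. -/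
open Set Metric MeasureTheory
open scoped RealInnerProductSpace

section Aux

variable {n : ℕ}

local notation "E" => EuclideanSpace ℝ (Fin n)

/-- Transitivity of the isometry group on spheres. -/
lemma sphere_exists_isometry {u v : E} (h : ‖u‖ = ‖v‖) :
    ∃ T : E ≃ₗᵢ[ℝ] E, T u = v :=
  ⟨Submodule.reflection (ℝ ∙ (u - v))ᗮ, Submodule.reflection_sub h⟩

/-- The geometric containment: the radial preimage (inside the unit ball) of the spherical cap
`{θ : ε ≤ ⟪θ, u⟫}` is contained in a small closed ball. -/
lemma cone_subset_closedBall {u : E} (hu : ‖u‖ = 1) {ε a R : ℝ} (hε : 0 < ε)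
    (ha : 0 ≤ a) (haR : a ^ 2 ≤ R ^ 2) (h1R : 1 - 2 * a * ε + a ^ 2 ≤ R ^ 2) (hR : 0 < R) :
    ((fun x : E => ‖x‖⁻¹ • x) ⁻¹' {θ ∈ sphere (0 : E) 1 | ε ≤ ⟪θ, u⟫}) ∩ ball (0 : E) 1
      ⊆ closedBall (a • u) R := by
  rintro x ⟨hx1, hx2⟩
  simp only [mem_preimage, mem_setOf_eq, mem_sphere_zero_iff_norm] at hx1
  obtain ⟨hxs, hxi⟩ := hx1
  rw [mem_ball_zero_iff] at hx2
  have hx0 : 0 < ‖x‖ := by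
    rcases eq_or_ne x 0 with rfl | hne
    · exfalso
      simp only [smul_zero, inner_zero_left] at hxi
      linarith
    · exact norm_pos_iff.mpr hne
  have hinner : ε * ‖x‖ ≤ ⟪x, u⟫ := by
    have : ⟪(‖x‖⁻¹ • x : E), u⟫ = ‖x‖⁻¹ * ⟪x, u⟫ := real_inner_smul_left x u (‖x‖⁻¹)
    rw [this] at hxi
    have := mul_le_mul_of_nonneg_left hxi hx0.le
    rwa [mul_inv_cancel_left₀ hx0.ne', mul_comm] at this
  rw [mem_closedBall, dist_eq_norm]
  have hsq : ‖x - a • u‖ ^ 2 ≤ R ^ 2 := by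
    rw [norm_sub_sq_real, real_inner_smul_right, norm_smul, Real.norm_eq_abs, abs_of_nonneg ha, hu,
      mul_one]
    have h2 : 2 * (a * ⟪x, u⟫) ≥ 2 * (a * (ε * ‖x‖)) := by
      have := mul_le_mul_of_nonneg_left hinner ha
      linarith
    rcases le_or_gt ‖x‖ (2 * a * ε) with hc | hc
    · nlinarith [hx0, hx2]
    · nlinarith [hx0, hx2]
  calc ‖x - a • u‖ = √(‖x - a • u‖ ^ 2) := by rw [Real.sqrt_sq (norm_nonneg _)]
    _ ≤ √(R ^ 2) := Real.sqrt_le_sqrt hsq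
    _ = R := Real.sqrt_sq hR.le

/-- Choice of the parameters for the ball containing the cone over the cap. -/
lemma exists_good_radius {ε : ℝ} (hε0 : 0 < ε) (hε1 : ε < 1) :
    ∃ a R : ℝ, 0 ≤ a ∧ 0 < R ∧ a ^ 2 ≤ R ^ 2 ∧ 1 - 2 * a * ε + a ^ 2 ≤ R ^ 2 ∧
      R ^ 2 < Real.exp (-ε ^ 2) := by
  rcases le_or_gt (ε ^ 2) (1 / 2) with hhalf | hhalf
  · refine ⟨ε, √(1 - ε ^ 2), hε0.le, Real.sqrt_pos.mpr (by nlinarith), ?_, ?_, ?_⟩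
    · rw [Real.sq_sqrt (by nlinarith)]; nlinarith
    · rw [Real.sq_sqrt (by nlinarith)]; ring_nf; nlinarith
    · rw [Real.sq_sqrt (by nlinarith)]
      have := Real.add_one_lt_exp (x := -ε ^ 2) (by nlinarith)
      linarith
  · refine ⟨(2 * ε)⁻¹, (2 * ε)⁻¹, by positivity, by positivity, le_refl _, ?_, ?_⟩
    · have h2ε : (2 * ε) ≠ 0 := by positivity
      field_simp
      norm_num
    · set x := ε ^ 2 with hx
      have hx1 : x < 1 := by nlinarith
      have hxpos : (0 : ℝ) < x := by positivity
      have hhalfx : 1 - x / 2 > 0 := by linarith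
      have h1 : Real.exp (x / 2) ≤ (1 - x / 2)⁻¹ := by
        have h2 : 1 - x / 2 ≤ Real.exp (-(x / 2)) := by
          have := Real.add_one_le_exp (-(x / 2))
          linarith
        have h3 := inv_anti₀ hhalfx h2
        rwa [Real.exp_neg, inv_inv] at h3
      have h4 : Real.exp x < 4 * x := by
        have hexp : Real.exp x = Real.exp (x / 2) * Real.exp (x / 2) := by
          rw [← Real.exp_add]; ring_nf
        have h5 : Real.exp (x / 2) * Real.exp (x / 2) ≤ (1 - x / 2)⁻¹ * (1 - x / 2)⁻¹ :=
          mul_le_mul h1 h1 (Real.exp_pos _).le (by positivity)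
        have h6 : (1 - x / 2)⁻¹ * (1 - x / 2)⁻¹ < 4 * x := by
          rw [← mul_inv]
          rw [inv_lt_iff_one_lt_mul₀ (by positivity)]
          nlinarith [mul_pos (sub_pos.mpr hx1) (show (0:ℝ) < 3 * x - x ^ 2 - 1 by nlinarith)]
        linarith [hexp ▸ lt_of_le_of_lt h5 h6]
      have h7 : ((2 * ε)⁻¹) ^ 2 = (4 * x)⁻¹ := by
        rw [hx]; field_simp; ring
      rw [h7, Real.exp_neg]
      exact inv_strictAnti₀ (Real.exp_pos _) h4

end Aux

/-- Concentration on the sphere: if `σ` is the rotation-invariant probability measure on the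
unit sphere `S^{n-1} ⊆ ℝⁿ`, then for every unit vector `u` and every `ε ∈ (0,1)`,
`σ {θ ∈ S^{n-1} : ⟨θ, u⟩ < ε} > 1 - e^{-nε²/2}`. -/
theorem sphere_cap_concentration (n : ℕ) (hn : 0 < n)
    (σ : Measure (EuclideanSpace ℝ (Fin n))) (hprob : IsProbabilityMeasure σ)
    (hsphere : σ (sphere (0 : EuclideanSpace ℝ (Fin n)) 1) = 1)
    (hinv : ∀ T : EuclideanSpace ℝ (Fin n) ≃ₗᵢ[ℝ] EuclideanSpace ℝ (Fin n),
      Measure.map T σ = σ)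
    (u : EuclideanSpace ℝ (Fin n)) (hu : u ∈ sphere (0 : EuclideanSpace ℝ (Fin n)) 1)
    (ε : ℝ) (hε : ε ∈ Set.Ioo (0 : ℝ) 1) :
    σ {θ ∈ sphere (0 : EuclideanSpace ℝ (Fin n)) 1 | ⟪θ, u⟫ < ε} >
      ENNReal.ofReal (1 - Real.exp (-(n * ε ^ 2) / 2)) := by
  classical
  haveI : IsProbabilityMeasure σ := hprob
  obtain ⟨hε0, hε1⟩ := hε
  have hu1 : ‖u‖ = 1 := mem_sphere_zero_iff_norm.mp hu
  haveI : Nontrivial (EuclideanSpace ℝ (Fin n)) :=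
    Module.nontrivial_of_finrank_pos (R := ℝ) (by rw [finrank_euclideanSpace_fin]; exact hn)
  set f : EuclideanSpace ℝ (Fin n) → EuclideanSpace ℝ (Fin n) := fun x => ‖x‖⁻¹ • x with hf
  have hfm : Measurable f := (measurable_norm.inv).smul measurable_id
  have hball0 : volume (ball (0 : EuclideanSpace ℝ (Fin n)) 1) ≠ 0 :=
    (measure_ball_pos _ _ one_pos).ne'
  have hballtop : volume (ball (0 : EuclideanSpace ℝ (Fin n)) 1) ≠ ⊤ :=
    measure_ball_lt_top.ne
  set ν : Measure (EuclideanSpace ℝ (Fin n)) :=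
    (volume (ball (0 : EuclideanSpace ℝ (Fin n)) 1))⁻¹ •
      ((volume.restrict (ball (0 : EuclideanSpace ℝ (Fin n)) 1)).map f) with hν
  have hνapply : ∀ s, MeasurableSet s →
      ν s = (volume (ball (0 : EuclideanSpace ℝ (Fin n)) 1))⁻¹ *
        volume (f ⁻¹' s ∩ ball (0 : EuclideanSpace ℝ (Fin n)) 1) := by
    intro s hs
    rw [hν, Measure.smul_apply, Measure.map_apply hfm hs,
      Measure.restrict_apply (hfm hs), smul_eq_mul]
  set Cap : EuclideanSpace ℝ (Fin n) → Set (EuclideanSpace ℝ (Fin n)) :=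
    fun v => {θ ∈ sphere (0 : EuclideanSpace ℝ (Fin n)) 1 | ε ≤ ⟪θ, v⟫} with hCap
  have hCapMeas : ∀ v, MeasurableSet (Cap v) := by
    intro v
    have h3 : MeasurableSet {θ : EuclideanSpace ℝ (Fin n) | ε ≤ ⟪θ, v⟫} :=
      measurableSet_le measurable_const
        ((continuous_inner.comp (Continuous.prodMk continuous_id continuous_const)).measurable)
    exact isClosed_sphere.measurableSet.inter h3
  -- transfer through isometries: cap measures are independent of the unit center
  have key : ∀ (m : Measure (EuclideanSpace ℝ (Fin n))),
      (∀ T : EuclideanSpace ℝ (Fin n) ≃ₗᵢ[ℝ] EuclideanSpace ℝ (Fin n), Measure.map T m = m) →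
      ∀ v, ‖v‖ = 1 → m (Cap v) = m (Cap u) := by
    intro m hm v hv
    obtain ⟨T, hT⟩ := sphere_exists_isometry (n := n) (hu1.trans hv.symm)
    have hpre : (T : EuclideanSpace ℝ (Fin n) → EuclideanSpace ℝ (Fin n)) ⁻¹' (Cap v) = Cap u := by
      ext θ
      simp only [hCap, mem_preimage, mem_setOf_eq, mem_sphere_zero_iff_norm, T.norm_map]
      rw [← hT, T.inner_map_map]
    calc m (Cap v) = (Measure.map T m) (Cap v) := by rw [hm T]
      _ = m ((T : EuclideanSpace ℝ (Fin n) → EuclideanSpace ℝ (Fin n)) ⁻¹' (Cap v)) :=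
          Measure.map_apply T.continuous.measurable (hCapMeas v)
      _ = m (Cap u) := by rw [hpre]
  -- ν is invariant under linear isometries
  have hνinv : ∀ T : EuclideanSpace ℝ (Fin n) ≃ₗᵢ[ℝ] EuclideanSpace ℝ (Fin n),
      Measure.map T ν = ν := by
    intro T
    rw [hν, Measure.map_smul]
    congr 1
    rw [Measure.map_map T.continuous.measurable hfm]
    have hcomm : (T : EuclideanSpace ℝ (Fin n) → EuclideanSpace ℝ (Fin n)) ∘ f
        = f ∘ (T : EuclideanSpace ℝ (Fin n) → EuclideanSpace ℝ (Fin n)) := by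
      funext x
      simp only [Function.comp_apply, hf, _root_.map_smul, T.norm_map]
    rw [hcomm, ← Measure.map_map hfm T.continuous.measurable]
    congr 1
    have h := (T.measurePreserving.restrict_preimage
      (measurableSet_ball (x := (0 : EuclideanSpace ℝ (Fin n))) (ε := 1))).map_eq
    rwa [show (T : EuclideanSpace ℝ (Fin n) → EuclideanSpace ℝ (Fin n)) ⁻¹' (ball 0 1) = ball 0 1
      from by ext x; simp [mem_ball_zero_iff]] at h
  have hνuniv : ν univ = 1 := by
    rw [hνapply _ MeasurableSet.univ]
    simp only [preimage_univ, univ_inter]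
    exact ENNReal.inv_mul_cancel hball0 hballtop
  haveI : IsProbabilityMeasure ν := ⟨hνuniv⟩
  have hνsphere : ν (sphere (0 : EuclideanSpace ℝ (Fin n)) 1) = 1 := by
    rw [hνapply _ isClosed_sphere.measurableSet]
    have hset : f ⁻¹' (sphere (0 : EuclideanSpace ℝ (Fin n)) 1) ∩ ball 0 1
        = ball (0 : EuclideanSpace ℝ (Fin n)) 1 \ {0} := by
      ext x
      simp only [mem_inter_iff, mem_preimage, mem_sphere_zero_iff_norm, mem_diff,
        mem_singleton_iff, hf]
      constructor
      · rintro ⟨h1, h2⟩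
        refine ⟨h2, ?_⟩
        rintro rfl
        simp at h1
      · rintro ⟨h2, h0⟩
        refine ⟨?_, h2⟩
        rw [norm_smul, Real.norm_eq_abs, abs_of_nonneg (inv_nonneg.mpr (norm_nonneg x)),
          inv_mul_cancel₀ (norm_ne_zero_iff.mpr h0)]
    rw [hset, measure_diff_null (measure_singleton 0)]
    exact ENNReal.inv_mul_cancel hball0 hballtop
  -- the double-counting set
  set S : Set (EuclideanSpace ℝ (Fin n) × EuclideanSpace ℝ (Fin n)) :=
    {p | p.1 ∈ sphere (0 : EuclideanSpace ℝ (Fin n)) 1 ∧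
      p.2 ∈ sphere (0 : EuclideanSpace ℝ (Fin n)) 1 ∧ ε ≤ ⟪p.1, p.2⟫} with hSdef
  have hS : MeasurableSet S := by
    have h3 : MeasurableSet {p : EuclideanSpace ℝ (Fin n) × EuclideanSpace ℝ (Fin n) |
        ε ≤ ⟪p.1, p.2⟫} := measurableSet_le measurable_const continuous_inner.measurable
    exact ((isClosed_sphere.measurableSet).preimage measurable_fst).inter
      (((isClosed_sphere.measurableSet).preimage measurable_snd).inter h3)
  have hway1 : (σ.prod ν) S = ν (Cap u) := by
    rw [Measure.prod_apply hS]
    have hslice : ∀ θ, ν (Prod.mk θ ⁻¹' S)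
        = (sphere (0 : EuclideanSpace ℝ (Fin n)) 1).indicator (fun _ => ν (Cap u)) θ := by
      intro θ
      by_cases hθ : θ ∈ sphere (0 : EuclideanSpace ℝ (Fin n)) 1
      · rw [indicator_of_mem hθ]
        have hps : Prod.mk θ ⁻¹' S = Cap θ := by
          ext φ
          simp only [hSdef, hCap, mem_preimage, mem_setOf_eq]
          constructor
          · rintro ⟨_, h2, h3⟩
            exact ⟨h2, by rwa [real_inner_comm]⟩
          · rintro ⟨h2, h3⟩
            exact ⟨hθ, h2, by rwa [real_inner_comm]⟩
        rw [hps, key ν hνinv θ (mem_sphere_zero_iff_norm.mp hθ)]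
      · rw [indicator_of_notMem hθ]
        have hps : Prod.mk θ ⁻¹' S = ∅ := by
          ext φ
          simp only [hSdef, mem_preimage, mem_setOf_eq, mem_empty_iff_false, iff_false]
          rintro ⟨h1, _⟩
          exact hθ h1
        rw [hps, measure_empty]
    rw [lintegral_congr hslice, lintegral_indicator isClosed_sphere.measurableSet,
      setLIntegral_const, hsphere, mul_one]
  have hway2 : (σ.prod ν) S = σ (Cap u) := by
    rw [Measure.prod_apply_symm hS]
    have hslice : ∀ φ, σ ((fun θ => (θ, φ)) ⁻¹' S)
        = (sphere (0 : EuclideanSpace ℝ (Fin n)) 1).indicator (fun _ => σ (Cap u)) φ := by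
      intro φ
      by_cases hφ : φ ∈ sphere (0 : EuclideanSpace ℝ (Fin n)) 1
      · rw [indicator_of_mem hφ]
        have hps : (fun θ => (θ, φ)) ⁻¹' S = Cap φ := by
          ext θ
          simp only [hSdef, hCap, mem_preimage, mem_setOf_eq]
          constructor
          · rintro ⟨h1, _, h3⟩
            exact ⟨h1, h3⟩
          · rintro ⟨h1, h3⟩
            exact ⟨h1, hφ, h3⟩
        rw [hps, key σ hinv φ (mem_sphere_zero_iff_norm.mp hφ)]
      · rw [indicator_of_notMem hφ]
        have hps : (fun θ => (θ, φ)) ⁻¹' S = ∅ := by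
          ext θ
          simp only [hSdef, mem_preimage, mem_setOf_eq, mem_empty_iff_false, iff_false]
          rintro ⟨_, h2, _⟩
          exact hφ h2
        rw [hps, measure_empty]
    rw [lintegral_congr hslice, lintegral_indicator isClosed_sphere.measurableSet,
      setLIntegral_const, hνsphere, mul_one]
  have hσν : σ (Cap u) = ν (Cap u) := by rw [← hway2, hway1]
  -- geometric bound on ν (Cap u)
  obtain ⟨a, R, ha, hR0, haR, h1R, hRexp⟩ := exists_good_radius hε0 hε1
  have hνcap : ν (Cap u) ≤ ENNReal.ofReal (R ^ n) := by
    rw [hνapply _ (hCapMeas u)]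
    have hle : volume (f ⁻¹' (Cap u) ∩ ball (0 : EuclideanSpace ℝ (Fin n)) 1)
        ≤ ENNReal.ofReal (R ^ n) * volume (ball (0 : EuclideanSpace ℝ (Fin n)) 1) := by
      refine le_trans (measure_mono (cone_subset_closedBall hu1 hε0 ha haR h1R hR0)) ?_
      rw [Measure.addHaar_closedBall _ _ hR0.le, finrank_euclideanSpace_fin]
    calc (volume (ball (0 : EuclideanSpace ℝ (Fin n)) 1))⁻¹ *
          volume (f ⁻¹' (Cap u) ∩ ball (0 : EuclideanSpace ℝ (Fin n)) 1)
        ≤ (volume (ball (0 : EuclideanSpace ℝ (Fin n)) 1))⁻¹ *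
          (ENNReal.ofReal (R ^ n) * volume (ball (0 : EuclideanSpace ℝ (Fin n)) 1)) :=
          mul_le_mul_right hle _
      _ = ENNReal.ofReal (R ^ n) := by
          rw [mul_comm (ENNReal.ofReal (R ^ n)), ← mul_assoc,
            ENNReal.inv_mul_cancel hball0 hballtop, one_mul]
  -- numeric estimates
  set t := Real.exp (-(n * ε ^ 2) / 2) with ht
  have ht0 : 0 < t := Real.exp_pos _
  have ht1 : t ≤ 1 := Real.exp_le_one_iff.mpr
    (by have h : (0:ℝ) ≤ (n : ℝ) * ε ^ 2 := by positivity
        linarith)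
  have hRn : R ^ n < t := by
    have hexp2 : Real.exp (-ε ^ 2 / 2) * Real.exp (-ε ^ 2 / 2) = Real.exp (-ε ^ 2) := by
      rw [← Real.exp_add]
      ring_nf
    have hRlt : R < Real.exp (-ε ^ 2 / 2) := by
      nlinarith [Real.exp_pos (-ε ^ 2 / 2)]
    calc R ^ n < (Real.exp (-ε ^ 2 / 2)) ^ n := pow_lt_pow_left₀ hRlt hR0.le hn.ne'
      _ = t := by
        rw [ht, ← Real.exp_nat_mul]
        congr 1
        push_cast
        ring
  have hB : σ (Cap u) < ENNReal.ofReal t := by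
    calc σ (Cap u) = ν (Cap u) := hσν
      _ ≤ ENNReal.ofReal (R ^ n) := hνcap
      _ < ENNReal.ofReal t := (ENNReal.ofReal_lt_ofReal_iff ht0).mpr hRn
  -- conclude
  set A := {θ ∈ sphere (0 : EuclideanSpace ℝ (Fin n)) 1 | ⟪θ, u⟫ < ε} with hA
  have hunion : A ∪ Cap u = sphere (0 : EuclideanSpace ℝ (Fin n)) 1 := by
    ext θ
    simp only [hA, hCap, mem_union, mem_setOf_eq]
    constructor
    · rintro (⟨h, _⟩ | ⟨h, _⟩) <;> exact h
    · intro h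
      rcases lt_or_ge (⟪θ, u⟫) ε with h' | h'
      · exact Or.inl ⟨h, h'⟩
      · exact Or.inr ⟨h, h'⟩
  have hdisj : Disjoint A (Cap u) := by
    rw [Set.disjoint_left]
    rintro θ ⟨_, h1⟩ ⟨_, h2⟩
    exact absurd h2 (not_le.mpr h1)
  have hsum : σ A + σ (Cap u) = 1 := by
    rw [← measure_union hdisj (hCapMeas u), hunion, hsphere]
  have hAval : σ A = 1 - σ (Cap u) := ENNReal.eq_sub_of_add_eq (measure_ne_top σ _) hsum
  rw [gt_iff_lt, hAval, lt_tsub_iff_right]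
  calc ENNReal.ofReal (1 - t) + σ (Cap u)
      < ENNReal.ofReal (1 - t) + ENNReal.ofReal t :=
        ENNReal.add_lt_add_left ENNReal.ofReal_ne_top hB
    _ = ENNReal.ofReal 1 := by
        rw [← ENNReal.ofReal_add (by linarith) ht0.le]
        ring_nf
    _ = 1 := ENNReal.ofReal_one
end
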